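/- arXiv:0807.0783 — 3 statements merged into one kernel-verified Lean document; each statement's English description precedes it below -/
import Mathlib

section
/- For two pairs (d, χ) and (d', χ'), where d, d' divide q and χ, χ' are Dirichlet characters modulo q/d and q/d' respectively, with (d, χ) ≠ (d', χ'), the sequences χ̃ and χ̃' are orthogonal: ∑_{n=1}^{q} χ̃(n) · conj(χ̃'(n)) = 0. -/
/-!
If `d ≠ d'` the supports are disjoint: `χ̃ n ≠ 0` forces `gcd n q = d`, since `n / d` must be a
unit modulo `q / d`. If `d = d'`, substituting `n = d m` turns the sum into
`∑_{a mod q/d} χ a * conj (χ' a)`, the sum of the nontrivial character `χ χ'⁻¹`, which vanishes.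
-/

open Finset ComplexConjugate

theorem sum_range_natCast_eq_sum_zmod {M : Type*} [AddCommMonoid M] (N : ℕ) [NeZero N]
    (g : ZMod N → M) : ∑ m ∈ range N, g m = ∑ a, g a := by
  refine sum_nbij (↑) (fun _ _ => mem_univ _) ?_ (fun a _ => ⟨a.val, by simp [ZMod.val_lt]⟩)
    fun _ _ => rfl
  intro m hm m' hm' h
  simpa [ZMod.natCast_eq_natCast_iff', Nat.mod_eq_of_lt (mem_range.1 hm),
    Nat.mod_eq_of_lt (mem_range.1 hm')] using h

theorem sum_Icc_one_natCast_eq_sum_zmod {M : Type*} [AddCommMonoid M] (N : ℕ) [NeZero N]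
    (g : ZMod N → M) : ∑ m ∈ Icc 1 N, g m = ∑ a, g a := by
  rw [← Equiv.sum_comp (Equiv.addRight 1), ← sum_range_natCast_eq_sum_zmod, range_eq_Ico,
    ← Ico_add_one_right_eq_Icc, ← zero_add 1, ← sum_Ico_add' (fun m : ℕ => g m)]
  simp

theorem sum_Icc_ite_dvd {M : Type*} [AddCommMonoid M] {q d : ℕ} (hd0 : 0 < d) (f : ℕ → M) :
    ∑ n ∈ Icc 1 q, (if d ∣ n then f (n / d) else 0) = ∑ m ∈ Icc 1 (q / d), f m := by
  have hmul : (Icc 1 q).filter (d ∣ ·) = (Icc 1 (q / d)).image (d * ·) := by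
    ext n
    simp only [mem_filter, mem_Icc, mem_image]
    constructor
    · rintro ⟨⟨h1, h2⟩, m, rfl⟩
      refine ⟨m, ⟨Nat.pos_of_mul_pos_left h1, ?_⟩, rfl⟩
      rw [Nat.le_div_iff_mul_le hd0, mul_comm]
      exact h2
    · rintro ⟨m, ⟨h1, h2⟩, rfl⟩
      refine ⟨⟨Nat.mul_pos hd0 h1, ?_⟩, dvd_mul_right d m⟩
      rw [Nat.le_div_iff_mul_le hd0, mul_comm] at h2
      exact h2
  rw [← sum_filter, hmul, sum_image fun _ _ _ _ h => Nat.eq_of_mul_eq_mul_left hd0 h]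
  simp only [Nat.mul_div_cancel_left _ hd0]

theorem Nat.gcd_eq_of_coprime_div {d n q : ℕ} (hn : d ∣ n) (hq : d ∣ q)
    (h : (n / d).Coprime (q / d)) : n.gcd q = d := by
  obtain ⟨k, rfl⟩ := hn
  obtain ⟨l, rfl⟩ := hq
  rcases d.eq_zero_or_pos with rfl | hd
  · simp
  rw [Nat.mul_div_cancel_left _ hd, Nat.mul_div_cancel_left _ hd] at h
  rw [Nat.gcd_mul_left, h, mul_one]

namespace DirichletCharacter

theorem sum_mul_conj_eq_zero {N : ℕ} [NeZero N] {χ χ' : DirichletCharacter ℂ N}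
    (h : χ ≠ χ') : ∑ a, χ a * conj (χ' a) = 0 := by
  have hconj : ∀ a, χ a * conj (χ' a) = (χ * χ'⁻¹) a := fun a => by
    rw [MulChar.mul_apply, ← MulChar.star_apply', RCLike.star_def]
  simp_rw [hconj]
  exact MulChar.sum_eq_zero_of_ne_one (mul_inv_eq_one.not.2 h)

/-- The paper's `χ̃` for a character `χ` modulo `N = q / d`. -/
noncomputable def dvdExtend {N : ℕ} (χ : DirichletCharacter ℂ N) (d n : ℕ) : ℂ :=
  if d ∣ n then χ (n / d : ℕ) else 0

theorem gcd_eq_of_dvdExtend_ne_zero {q d n : ℕ} (hd : d ∣ q) {χ : DirichletCharacter ℂ (q / d)}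
    (h : χ.dvdExtend d n ≠ 0) : n.gcd q = d := by
  unfold dvdExtend at h
  split_ifs at h with hdn
  · exact Nat.gcd_eq_of_coprime_div hdn hd
      ((ZMod.isUnit_iff_coprime _ _).1 (not_imp_comm.1 χ.map_nonunit h))
  · exact absurd rfl h

theorem dvdExtend_mul_conj_eq_zero {q d d' n : ℕ} (hd : d ∣ q) (hd' : d' ∣ q) (hdd : d ≠ d')
    (χ : DirichletCharacter ℂ (q / d)) (χ' : DirichletCharacter ℂ (q / d')) :
    χ.dvdExtend d n * conj (χ'.dvdExtend d' n) = 0 := by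
  by_contra h
  obtain ⟨h, h'⟩ := mul_ne_zero_iff.1 h
  exact hdd ((gcd_eq_of_dvdExtend_ne_zero hd h).symm.trans
    (gcd_eq_of_dvdExtend_ne_zero hd' ((map_ne_zero _).1 h')))

theorem sum_dvdExtend_mul_conj {q d : ℕ} (hd0 : 0 < d) [NeZero (q / d)]
    (χ χ' : DirichletCharacter ℂ (q / d)) :
    ∑ n ∈ Icc 1 q, χ.dvdExtend d n * conj (χ'.dvdExtend d n) = ∑ a, χ a * conj (χ' a) := by
  have hterm : ∀ n, χ.dvdExtend d n * conj (χ'.dvdExtend d n) =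
      if d ∣ n then χ (n / d : ℕ) * conj (χ' (n / d : ℕ)) else 0 := fun n => by
    unfold dvdExtend
    split_ifs <;> simp
  simp_rw [hterm]
  rw [sum_Icc_ite_dvd hd0 (fun m => χ m * conj (χ' m))]
  exact sum_Icc_one_natCast_eq_sum_zmod _ (fun a => χ a * conj (χ' a))

end DirichletCharacter

open DirichletCharacter in
theorem stmt_2_general (q d d' : ℕ) (hq : 0 < q) (hd : d ∣ q) (hd' : d' ∣ q)
    (χ : DirichletCharacter ℂ (q / d)) (χ' : DirichletCharacter ℂ (q / d'))
    (hne : ¬ (d = d' ∧ HEq χ χ')) :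
    ∑ n ∈ Finset.Icc 1 q,
      (if d ∣ n then χ ((n / d : ℕ) : ZMod (q / d)) else 0) *
        (starRingEnd ℂ) (if d' ∣ n then χ' ((n / d' : ℕ) : ZMod (q / d')) else 0) = 0 := by
  change ∑ n ∈ Icc 1 q, χ.dvdExtend d n * conj (χ'.dvdExtend d' n) = 0
  by_cases hdd : d = d'
  · subst hdd
    have hd0 : 0 < d := Nat.pos_of_dvd_of_pos hd hq
    have : NeZero (q / d) := ⟨(Nat.div_pos (Nat.le_of_dvd hq hd) hd0).ne'⟩
    rw [sum_dvdExtend_mul_conj hd0]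
    exact sum_mul_conj_eq_zero fun h => hne ⟨rfl, heq_of_eq h⟩
  · exact sum_eq_zero fun n _ => dvdExtend_mul_conj_eq_zero hd hd' hdd χ χ'

/-- Orthogonality: for distinct pairs `(d, χ)` and `(d', χ')`, with `d, d' ∣ q` and `χ, χ'`
Dirichlet characters modulo `q/d` and `q/d'`, the sequences `χ̃` and `χ̃'` are orthogonal
for the inner product `⟨a,b⟩ = ∑_{n=1}^q a_n conj(b_n)`. -/
theorem stmt_2 (q d d' : ℕ) (hq : 0 < q) (hd : d ∣ q) (hd' : d' ∣ q)
    (hd0 : 0 < d) (hd'0 : 0 < d')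
    (χ : DirichletCharacter ℂ (q / d)) (χ' : DirichletCharacter ℂ (q / d'))
    (hne : ¬ (d = d' ∧ HEq χ χ')) :
    ∑ n ∈ Finset.Icc 1 q,
      (if d ∣ n then χ ((n / d : ℕ) : ZMod (q / d)) else 0) *
        (starRingEnd ℂ) (if d' ∣ n then χ' ((n / d' : ℕ) : ZMod (q / d')) else 0) = 0 :=
  stmt_2_general q d d' hq hd hd' χ χ' hne
end

section
/- Let λ₀, λ₁, λ₂ be nonnegative reals with λ₀ + λ₁ + λ₂ = 1, 1/3 ≤ λ₀ ≤ 1/3 + 1/100, 1/3 ≤ λ₁ ≤ 1/3 + 1/100 (hence 1/3 − 1/50 ≤ λ₂ ≤ 1/3). Then every complex number z with |z − λ₀| ≤ 1/10 can be written as z = λ₁·e^{i u₁} + λ₂·e^{−i u₂} for some real u₁, u₂. -/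
/-!
Writing `r = ‖z‖`, the law of cosines gives an angle `α` with `‖r - a e^{iα}‖ = b` as soon as
`|a - b| ≤ r ≤ a + b`, i.e. the circles of radii `a` about `0` and `b` about `r` meet. Rotating
by `arg z` turns this into `z = a e^{iu₁} + w` with `‖w‖ = b`. Under the hypotheses of the
theorem, `‖z‖` lies within `1/10` of `λ₀`, well inside `[|λ₁ - λ₂|, λ₁ + λ₂]`.
-/

open Complex

theorem Real.exists_mul_cos_eq {x y : ℝ} (h : |x| ≤ y) : ∃ α : ℝ, y * Real.cos α = x := by
  rcases (abs_nonneg x).trans h |>.eq_or_lt with hy | hy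
  · exact ⟨0, by simp [← hy, abs_nonpos_iff.mp (hy ▸ h)]⟩
  · refine ⟨Real.arccos (x / y), ?_⟩
    have hxy := abs_le.mp h
    rw [Real.cos_arccos (by rw [le_div_iff₀ hy]; linarith) (by rw [div_le_one hy]; linarith)]
    field_simp

theorem Complex.sq_norm_ofReal_sub_mul_exp (r a α : ℝ) :
    ‖(r : ℂ) - a * exp (α * I)‖ ^ 2 = r ^ 2 + a ^ 2 - 2 * a * r * Real.cos α := by
  rw [Complex.sq_norm, normSq_apply]
  simp only [sub_re, sub_im, ofReal_re, ofReal_im, re_ofReal_mul, im_ofReal_mul,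
    exp_ofReal_mul_I_re, exp_ofReal_mul_I_im]
  linear_combination a ^ 2 * Real.sin_sq_add_cos_sq α

theorem Complex.exists_norm_ofReal_sub_mul_exp_eq {r a b : ℝ} (hl : |a - b| ≤ r)
    (hu : r ≤ a + b) : ∃ α : ℝ, ‖(r : ℂ) - a * exp (α * I)‖ = b := by
  have hb : 0 ≤ b := by linarith [le_abs_self (a - b)]
  obtain ⟨α, hα⟩ : ∃ α : ℝ, 2 * a * r * Real.cos α = r ^ 2 + a ^ 2 - b ^ 2 := by
    apply Real.exists_mul_cos_eq
    have := abs_le.mp hl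
    rw [abs_le]
    constructor <;> nlinarith
  refine ⟨α, ?_⟩
  rw [← sq_eq_sq₀ (norm_nonneg _) hb, sq_norm_ofReal_sub_mul_exp, hα]
  ring

theorem Complex.exists_eq_mul_exp_add_mul_exp {a b : ℝ} {z : ℂ} (hl : |a - b| ≤ ‖z‖)
    (hu : ‖z‖ ≤ a + b) :
    ∃ u₁ u₂ : ℝ, z = a * exp (I * u₁) + b * exp (-(I * u₂)) := by
  obtain ⟨α, hα⟩ := exists_norm_ofReal_sub_mul_exp_eq hl hu
  set w := z - a * exp (I * ↑(arg z + α)) with hw_def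
  have hw : w = exp (arg z * I) * ((‖z‖ : ℂ) - a * exp (α * I)) := calc
    w = ‖z‖ * exp (arg z * I) - a * exp (I * ↑(arg z + α)) := by rw [norm_mul_exp_arg_mul_I]
    _ = _ := by
      rw [ofReal_add, show I * (↑(arg z) + ↑α) = arg z * I + α * I by ring, exp_add]
      ring
  have hwb : ‖w‖ = b := by rw [hw, norm_mul, norm_exp_ofReal_mul_I, one_mul, hα]
  have hw_polar : (b : ℂ) * exp (I * arg w) = w := by
    rw [mul_comm I, ← hwb, norm_mul_exp_arg_mul_I]
  refine ⟨arg z + α, -arg w, ?_⟩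
  rw [ofReal_neg, mul_neg, neg_neg, hw_polar, hw_def]
  ring

theorem stmt_5_general (lam0 lam1 lam2 : ℝ) (h0 : 0 ≤ lam0)
    (hsum : lam0 + lam1 + lam2 = 1)
    (h0l : 1/3 ≤ lam0) (h0u : lam0 ≤ 1/3 + 1/100)
    (h1l : 1/3 ≤ lam1) (h1u : lam1 ≤ 1/3 + 1/100)
    (z : ℂ) (hz : ‖z - lam0‖ ≤ 1/10) :
    ∃ u₁ u₂ : ℝ, z = lam1 * Complex.exp (Complex.I * u₁)
      + lam2 * Complex.exp (-(Complex.I * u₂)) := by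
  have hnorm : |‖z‖ - lam0| ≤ 1 / 10 := by
    simpa [abs_of_nonneg h0] using (abs_norm_sub_norm_le z (lam0 : ℂ)).trans hz
  obtain ⟨hzl, hzu⟩ := abs_le.mp hnorm
  apply exists_eq_mul_exp_add_mul_exp
  · rw [abs_le]
    constructor <;> linarith
  · linarith

/-- If `λ₀ + λ₁ + λ₂ = 1` with `1/3 ≤ λ₀, λ₁ ≤ 1/3 + 1/100` (and `λ₂ ≥ 0`), then every
complex `z` with `|z - λ₀| ≤ 1/10` can be written as `λ₁ e^{iu₁} + λ₂ e^{-iu₂}`. -/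
theorem stmt_5 (lam0 lam1 lam2 : ℝ) (h0 : 0 ≤ lam0) (h1 : 0 ≤ lam1) (h2 : 0 ≤ lam2)
    (hsum : lam0 + lam1 + lam2 = 1)
    (h0l : 1/3 ≤ lam0) (h0u : lam0 ≤ 1/3 + 1/100)
    (h1l : 1/3 ≤ lam1) (h1u : lam1 ≤ 1/3 + 1/100)
    (z : ℂ) (hz : ‖z - lam0‖ ≤ 1/10) :
    ∃ u₁ u₂ : ℝ, z = lam1 * Complex.exp (Complex.I * u₁)
      + lam2 * Complex.exp (-(Complex.I * u₂)) :=
  stmt_5_general lam0 lam1 lam2 h0 hsum h0l h0u h1l h1u z hz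
end

section
/- Let q be a positive integer and 1 ≤ a ≤ q with gcd(a,q) = 1. Then the sum S_a(σ) = ∑_{p ≡ a (mod q), p prime} 1/p^σ tends to +∞ as σ → 1⁺. Consequently, for any R > 0 there exists η > 0 such that S_a(σ) ≥ R for all 1 < σ ≤ 1 + η. -/
/-!
Let `S(σ) = ∑ p^{-σ}` and `L(x) = ∑ log p · p^{-x}`, both over the primes `p ≡ a (mod q)`.
The L-function argument behind Dirichlet's theorem gives
`L(x) ≥ φ(q)⁻¹ / (x - 1) - C` on `(1, 2]`, while `e^t ≥ 1 + t` gives, term by term,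
`S(α) - S(β) ≥ (β - α) L(β)` for `α ≤ β`. Telescoping along the dyadic points
`1 + 2^j (σ - 1)`, `j ≤ N`, with `2^N (σ - 1) ≤ 1`, each step contributes at least
`φ(q)⁻¹ / 2` up to a total error `|C|`, so `S(σ) ≥ N φ(q)⁻¹ / 2 - |C|`, which grows like
`log (1 / (σ - 1))`.
-/

open Filter Topology

lemma sub_mul_log_div_rpow_le {x : ℝ} (hx : 0 < x) (α β : ℝ) :
    (β - α) * (Real.log x / x ^ β) ≤ 1 / x ^ α - 1 / x ^ β := by
  have hxβ : 0 < x ^ β := Real.rpow_pos_of_pos hx β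
  have hexp : (β - α) * Real.log x ≤ x ^ (β - α) - 1 := by
    rw [Real.rpow_def_of_pos hx, mul_comm]
    exact le_sub_iff_add_le.mpr (Real.add_one_le_exp _)
  calc (β - α) * (Real.log x / x ^ β) ≤ (x ^ (β - α) - 1) / x ^ β := by
        rw [mul_div_assoc']
        exact div_le_div_of_nonneg_right hexp hxβ.le
    _ = 1 / x ^ α - 1 / x ^ β := by
        rw [Real.rpow_sub hx]
        field_simp

section Dyadic

variable {S L : ℝ → ℝ} {c C : ℝ}

lemma dyadic_lower_bound (hS : ∀ x, 1 < x → 0 ≤ S x)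
    (hSL : ∀ α β, 1 < α → α ≤ β → (β - α) * L β ≤ S α - S β)
    (hL : ∀ x ∈ Set.Ioc (1 : ℝ) 2, c / (x - 1) - C ≤ L x)
    {σ : ℝ} (hσ : 1 < σ) {N : ℕ} (hN : 2 ^ N * (σ - 1) ≤ 1) :
    N * (c / 2) - |C| ≤ S σ := by
  set s : ℕ → ℝ := fun j => 1 + 2 ^ j * (σ - 1) with hs
  have hδ : ∀ j : ℕ, 0 < (2 : ℝ) ^ j * (σ - 1) := fun j => by positivity [sub_pos.mpr hσ]
  have hstep : ∀ j ∈ Finset.range N, c / 2 - 2 ^ j * (σ - 1) * C ≤ S (s j) - S (s (j + 1)) := by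
    intro j hj
    have hjN : (2 : ℝ) ^ (j + 1) ≤ 2 ^ N :=
      pow_le_pow_right₀ one_le_two (Finset.mem_range.mp hj)
    have hmem : s (j + 1) ∈ Set.Ioc (1 : ℝ) 2 := by
      refine ⟨by linarith [hδ (j + 1)], ?_⟩
      nlinarith [sub_pos.mpr hσ]
    have hgap : s (j + 1) - s j = 2 ^ j * (σ - 1) := by simp only [hs, pow_succ]; ring
    have hdist : s (j + 1) - 1 = 2 * (2 ^ j * (σ - 1)) := by simp only [hs, pow_succ]; ring
    calc c / 2 - 2 ^ j * (σ - 1) * C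
        = (s (j + 1) - s j) * (c / (s (j + 1) - 1) - C) := by
          have hne := (hδ j).ne'
          rw [hgap, hdist]
          generalize (2 : ℝ) ^ j * (σ - 1) = δ at hne ⊢
          field_simp
      _ ≤ (s (j + 1) - s j) * L (s (j + 1)) := by
          rw [hgap]
          exact mul_le_mul_of_nonneg_left (hL _ hmem) (hδ j).le
      _ ≤ S (s j) - S (s (j + 1)) :=
          hSL _ _ (by linarith [hδ j]) (by linarith [hδ j])
  have hgeom : ∑ j ∈ Finset.range N, (2 : ℝ) ^ j * (σ - 1) = (2 ^ N - 1) * (σ - 1) := by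
    rw [← Finset.sum_mul, geom_sum_eq one_lt_two.ne' N]
    norm_num
  have hCabs : (2 ^ N - 1) * (σ - 1) * C ≤ |C| := by
    have h0 : 0 ≤ (2 ^ N - 1 : ℝ) * (σ - 1) := by
      nlinarith [one_le_pow₀ (one_le_two : (1 : ℝ) ≤ 2) (n := N)]
    nlinarith [le_abs_self C, abs_nonneg C]
  calc N * (c / 2) - |C| ≤ ∑ j ∈ Finset.range N, (c / 2 - 2 ^ j * (σ - 1) * C) := by
        rw [Finset.sum_sub_distrib, ← Finset.sum_mul, hgeom]
        simp only [Finset.sum_const, Finset.card_range, nsmul_eq_mul]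
        linarith
    _ ≤ ∑ j ∈ Finset.range N, (S (s j) - S (s (j + 1))) := Finset.sum_le_sum hstep
    _ = S σ - S (s N) := by rw [Finset.sum_range_sub']; simp [hs]
    _ ≤ S σ := by linarith [hS (s N) (by linarith [hδ N])]

lemma tendsto_atTop_nhdsGT_one_of_sub_ge_mul (hc : 0 < c) (hS : ∀ x, 1 < x → 0 ≤ S x)
    (hSL : ∀ α β, 1 < α → α ≤ β → (β - α) * L β ≤ S α - S β)
    (hL : ∀ x ∈ Set.Ioc (1 : ℝ) 2, c / (x - 1) - C ≤ L x) :
    Tendsto S (𝓝[>] 1) atTop := by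
  refine tendsto_atTop.mpr fun b => ?_
  obtain ⟨N, hN⟩ := exists_nat_ge ((b + |C|) / (c / 2))
  have hb : b ≤ N * (c / 2) - |C| := by
    have := (div_le_iff₀ (half_pos hc)).mp hN
    linarith
  have hη : (0 : ℝ) < 1 / 2 ^ N := by positivity
  filter_upwards [Ioc_mem_nhdsGT (lt_add_of_pos_right 1 hη)] with σ hσ
  refine hb.trans (dyadic_lower_bound hS hSL hL hσ.1 ?_)
  have := hσ.2
  rw [← le_div_iff₀' (by positivity)]
  linarith

end Dyadic

lemma exists_pos_forall_le_of_tendsto_nhdsGT {f : ℝ → ℝ} {x : ℝ} (hf : Tendsto f (𝓝[>] x) atTop)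
    (R : ℝ) : ∃ η : ℝ, 0 < η ∧ ∀ σ : ℝ, x < σ → σ ≤ x + η → R ≤ f σ := by
  obtain ⟨u, hxu, hu⟩ := mem_nhdsGT_iff_exists_Ioc_subset.mp (hf.eventually_ge_atTop R)
  exact ⟨u - x, sub_pos.mpr hxu, fun σ h₁ h₂ => hu ⟨h₁, by linarith⟩⟩

lemma summable_ite_one_div_rpow (P : ℕ → Prop) [DecidablePred P] {σ : ℝ} (hσ : 1 < σ) :
    Summable fun n : ℕ => if P n then 1 / (n : ℝ) ^ σ else 0 := by
  refine ((Real.summable_one_div_nat_rpow.mpr hσ).indicator {n | P n}).congr fun n => ?_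
  simp [Set.indicator_apply]

lemma sub_mul_tsum_log_div_rpow_le (P : ℕ → Prop) [DecidablePred P] {α β : ℝ} (hα : 1 < α)
    (hβ : 1 < β) (hL : Summable fun n : ℕ => if P n then Real.log n / (n : ℝ) ^ β else 0) :
    (β - α) * ∑' n : ℕ, (if P n then Real.log n / (n : ℝ) ^ β else 0) ≤
      (∑' n : ℕ, if P n then 1 / (n : ℝ) ^ α else 0) -
        ∑' n : ℕ, if P n then 1 / (n : ℝ) ^ β else 0 := by
  have hSα := summable_ite_one_div_rpow P hα
  have hSβ := summable_ite_one_div_rpow P hβ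
  rw [← tsum_mul_left, ← hSα.tsum_sub hSβ]
  refine (hL.mul_left _).tsum_le_tsum (fun n => ?_) (hSα.sub hSβ)
  split_ifs
  · rcases n.eq_zero_or_pos with rfl | hn
    · simp [Real.zero_rpow (zero_lt_one.trans hα).ne', Real.zero_rpow (zero_lt_one.trans hβ).ne']
    · exact sub_mul_log_div_rpow_le (by exact_mod_cast hn) α β
  · simp

namespace ArithmeticFunction.vonMangoldt

variable {q : ℕ}

lemma summable_residueClass_div_rpow (A : ZMod q) {x : ℝ} (hx : 1 < x) :
    Summable fun n : ℕ => residueClass A n / (n : ℝ) ^ x :=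
  LSeries.summable_real_of_abscissaOfAbsConv_lt <|
    (abscissaOfAbsConv_residueClass_le_one A).trans_lt <| mod_cast hx

lemma residueClass_div_rpow_eq (A : ZMod q) (x : ℝ) (n : ℕ) :
    residueClass A n / (n : ℝ) ^ x =
      (if n.Prime ∧ (n : ZMod q) = A then Real.log n / (n : ℝ) ^ x else 0) +
        (if n.Prime then 0 else residueClass A n) / (n : ℝ) ^ x := by
  by_cases hp : n.Prime
  · by_cases hn : (n : ZMod q) = A <;>
      simp [residueClass, hp, hn, vonMangoldt_apply_prime hp]
  · simp [hp]

lemma summable_ite_prime_log_div_rpow (A : ZMod q) {x : ℝ} (hx : 1 < x) :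
    Summable fun n : ℕ => if n.Prime ∧ (n : ZMod q) = A then Real.log n / (n : ℝ) ^ x else 0 := by
  refine (summable_residueClass_div_rpow A hx).of_nonneg_of_le (fun n => ?_) (fun n => ?_)
  · split_ifs
    · exact div_nonneg (Real.log_natCast_nonneg n) (by positivity)
    · exact le_rfl
  · rw [residueClass_div_rpow_eq A x n, le_add_iff_nonneg_right]
    exact div_nonneg (by split_ifs <;> simp [residueClass_nonneg]) (by positivity)

lemma tsum_ite_prime_log_div_rpow_lower_bound [NeZero q] {A : ZMod q} (ha : IsUnit A) :
    ∃ C : ℝ, ∀ x ∈ Set.Ioc (1 : ℝ) 2, (q.totient : ℝ)⁻¹ / (x - 1) - C ≤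
      ∑' n : ℕ, if n.Prime ∧ (n : ZMod q) = A then Real.log n / (n : ℝ) ^ x else 0 := by
  obtain ⟨C, hC⟩ := LSeries_residueClass_lower_bound ha
  set g : ℕ → ℝ := fun n => (if n.Prime then 0 else residueClass A n) / n
  refine ⟨C + ∑' n, g n, fun x hx => ?_⟩
  have hnum (n : ℕ) : 0 ≤ if n.Prime then 0 else residueClass A n := by
    split_ifs
    exacts [le_rfl, residueClass_nonneg A n]
  have hg_le (n : ℕ) : (if n.Prime then 0 else residueClass A n) / (n : ℝ) ^ x ≤ g n := by
    rcases n.eq_zero_or_pos with rfl | hn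
    · simp [g]
    · exact div_le_div_of_nonneg_left (hnum n) (by exact_mod_cast hn)
        (Real.self_le_rpow_of_one_le (by exact_mod_cast hn) hx.1.le)
  have hg_summable := (summable_residueClass_non_primes_div A).of_nonneg_of_le
    (fun n => div_nonneg (hnum n) (by positivity)) hg_le
  have hsplit : ∑' n : ℕ, residueClass A n / (n : ℝ) ^ x =
      (∑' n : ℕ, if n.Prime ∧ (n : ZMod q) = A then Real.log n / (n : ℝ) ^ x else 0) +
        ∑' n : ℕ, (if n.Prime then 0 else residueClass A n) / (n : ℝ) ^ x := by
    rw [← (summable_ite_prime_log_div_rpow A hx.1).tsum_add hg_summable]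
    exact tsum_congr (residueClass_div_rpow_eq A x)
  have hg_tsum_le := hg_summable.tsum_le_tsum hg_le (summable_residueClass_non_primes_div A)
  linarith [hC hx]

theorem tendsto_tsum_prime_and_eq_mod_one_div_rpow [NeZero q] {A : ZMod q} (ha : IsUnit A) :
    Tendsto (fun σ : ℝ => ∑' p : ℕ, if p.Prime ∧ (p : ZMod q) = A then 1 / (p : ℝ) ^ σ else 0)
      (𝓝[>] 1) atTop := by
  obtain ⟨C, hC⟩ := tsum_ite_prime_log_div_rpow_lower_bound ha
  refine tendsto_atTop_nhdsGT_one_of_sub_ge_mul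
    (inv_pos.mpr (mod_cast q.totient_pos.mpr (NeZero.pos q)))
    (fun x _ => tsum_nonneg fun n => ?_)
    (fun α β hα hαβ => sub_mul_tsum_log_div_rpow_le _ hα (hα.trans_le hαβ)
      (summable_ite_prime_log_div_rpow A (hα.trans_le hαβ))) hC
  split_ifs
  · positivity
  · exact le_rfl

end ArithmeticFunction.vonMangoldt

theorem stmt_10_general (q a : ℕ) (hq : 0 < q)
    (hgcd : Nat.gcd a q = 1) :
    Filter.Tendsto
      (fun σ : ℝ => ∑' p : ℕ, if p.Prime ∧ p % q = a % q then 1 / (p : ℝ) ^ σ else 0)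
      (nhdsWithin 1 (Set.Ioi 1)) Filter.atTop ∧
    ∀ R : ℝ, 0 < R → ∃ η : ℝ, 0 < η ∧ ∀ σ : ℝ, 1 < σ → σ ≤ 1 + η →
      R ≤ ∑' p : ℕ, if p.Prime ∧ p % q = a % q then 1 / (p : ℝ) ^ σ else 0 := by
  have : NeZero q := ⟨hq.ne'⟩
  have hclass (p : ℕ) : p % q = a % q ↔ (p : ZMod q) = a :=
    (ZMod.natCast_eq_natCast_iff' p a q).symm
  have htendsto := ArithmeticFunction.vonMangoldt.tendsto_tsum_prime_and_eq_mod_one_div_rpow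
    ((ZMod.isUnit_iff_coprime a q).mpr hgcd)
  simp only [← hclass] at htendsto
  exact ⟨htendsto, fun R _ => exists_pos_forall_le_of_tendsto_nhdsGT htendsto R⟩

/-- For `gcd(a,q) = 1`, the sum `S_a(σ) = ∑_{p ≡ a (q)} p^{-σ}` over primes tends to `+∞`
as `σ → 1⁺`; consequently for every `R > 0` there is `η > 0` with `S_a(σ) ≥ R`
for all `1 < σ ≤ 1 + η`. -/
theorem stmt_10 (q a : ℕ) (hq : 0 < q) (ha1 : 1 ≤ a) (haq : a ≤ q)
    (hgcd : Nat.gcd a q = 1) :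
    Filter.Tendsto
      (fun σ : ℝ => ∑' p : ℕ, if p.Prime ∧ p % q = a % q then 1 / (p : ℝ) ^ σ else 0)
      (nhdsWithin 1 (Set.Ioi 1)) Filter.atTop ∧
    ∀ R : ℝ, 0 < R → ∃ η : ℝ, 0 < η ∧ ∀ σ : ℝ, 1 < σ → σ ≤ 1 + η →
      R ≤ ∑' p : ℕ, if p.Prime ∧ p % q = a % q then 1 / (p : ℝ) ^ σ else 0 :=
  stmt_10_general q a hq hgcd
end
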